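/- (Kolotilina's second bound.) Let G be a finite simple graph on n vertices with at least one edge and chromatic number χ. Then μ_1 ≤ (χ − 1)·(μ_1 − δ_n + θ_n); equivalently, χ ≥ 1 + μ_1/(μ_1 − δ_n + θ_n), where θ_n = 0. -/

import Mathlib

/-!
Let `c` be a proper colouring of `G` with `χ` colours and, for colours `i, j`, let
`x_ij = 1_{c⁻¹ i} - 1_{c⁻¹ j}`. Summed over all pairs, `∑ x_ij x_ijᵀ = 2χ B - 2J` where
`B u v = [c u = c v]` and `J` is the all-ones matrix. Since adjacent vertices get different
colours, `Q` is diagonal on the support of `B`, so `∑ x_ijᵀ Q x_ij = 2χ · 2m - 2 · 4m`, while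
`∑ ‖x_ij‖² = 2(χ - 1) n`. The Rayleigh bound `δ_n ‖x‖² ≤ xᵀ Q x` therefore gives
`(χ - 1) n δ_n ≤ (χ - 2) 2m`, and `2m = 𝟙ᵀ A 𝟙 ≤ n μ_1` turns this into
`(χ - 1) δ_n ≤ (χ - 2) μ_1`, which is the bound since `θ_n = 0`.
-/

open Matrix Finset

namespace Matrix.IsHermitian

open scoped MatrixOrder

variable {n : Type*} [Fintype n] [DecidableEq n] {A : Matrix n n ℝ}

theorem mul_dotProduct_self_le_dotProduct_mulVec (hA : A.IsHermitian) {t : ℝ}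
    (ht : ∀ i, t ≤ hA.eigenvalues i) (x : n → ℝ) :
    t * (x ⬝ᵥ x) ≤ x ⬝ᵥ A *ᵥ x := by
  have hle : algebraMap ℝ (Matrix n n ℝ) t ≤ A := algebraMap_le_of_le_spectrum
    (by rwa [hA.spectrum_real_eq_range_eigenvalues, Set.forall_mem_range]) hA.isSelfAdjoint
  simpa [Algebra.algebraMap_eq_smul_one, sub_mulVec, smul_mulVec, sub_nonneg] using
    (le_iff.mp hle).dotProduct_mulVec_nonneg x

theorem dotProduct_mulVec_le_mul_dotProduct_self (hA : A.IsHermitian) {t : ℝ}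
    (ht : ∀ i, hA.eigenvalues i ≤ t) (x : n → ℝ) :
    x ⬝ᵥ A *ᵥ x ≤ t * (x ⬝ᵥ x) := by
  have hle : A ≤ algebraMap ℝ (Matrix n n ℝ) t := le_algebraMap_of_spectrum_le
    (by rwa [hA.spectrum_real_eq_range_eigenvalues, Set.forall_mem_range]) hA.isSelfAdjoint
  simpa [Algebra.algebraMap_eq_smul_one, sub_mulVec, smul_mulVec, sub_nonneg] using
    (le_iff.mp hle).dotProduct_mulVec_nonneg x

end Matrix.IsHermitian

theorem Matrix.sum_dotProduct_mulVec_eq {V ι : Type*} [Fintype V] [Fintype ι]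
    (x : ι → V → ℝ) (M : Matrix V V ℝ) :
    ∑ k, x k ⬝ᵥ M *ᵥ x k = ∑ u, ∑ v, M u v * ∑ k, x k u * x k v := by
  simp only [dotProduct, mulVec, mul_sum]
  rw [sum_comm]
  refine sum_congr rfl fun u _ => ?_
  rw [sum_comm]
  exact sum_congr rfl fun v _ => sum_congr rfl fun k _ => by ring

section ColorClassDiff

variable {V α : Type*} [Fintype α] [DecidableEq α]

def colorClassDiff (c : V → α) (i j : α) : V → ℝ :=
  fun v => (if c v = i then 1 else 0) - (if c v = j then 1 else 0)

theorem sum_colorClassDiff_mul_colorClassDiff (c : V → α) (u v : V) :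
    ∑ i, ∑ j, colorClassDiff c i j u * colorClassDiff c i j v
      = 2 * Fintype.card α * (if c u = c v then 1 else 0) - 2 := by
  simp only [colorClassDiff, eq_comm, mul_sub, mul_ite, mul_one, mul_zero, sum_sub_distrib,
    sum_ite_irrel, sum_const, card_univ, nsmul_eq_mul, sum_ite_eq', mem_univ, ↓reduceIte]
  split_ifs <;> ring

variable [Fintype V]

theorem sum_colorClassDiff_dotProduct_mulVec (c : V → α) (M : Matrix V V ℝ) :
    ∑ i, ∑ j, colorClassDiff c i j ⬝ᵥ M *ᵥ colorClassDiff c i j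
      = 2 * Fintype.card α * ∑ u, ∑ v, (if c u = c v then M u v else 0)
        - 2 * ∑ u, ∑ v, M u v := by
  have h := sum_dotProduct_mulVec_eq (fun p : α × α => colorClassDiff c p.1 p.2) M
  simp only [Fintype.sum_prod_type, sum_colorClassDiff_mul_colorClassDiff] at h
  rw [h, mul_sum, mul_sum, ← sum_sub_distrib]
  refine sum_congr rfl fun u _ => ?_
  rw [mul_sum, mul_sum, ← sum_sub_distrib]
  refine sum_congr rfl fun v _ => ?_
  split_ifs <;> ring

theorem sum_colorClassDiff_dotProduct_self (c : V → α) :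
    ∑ i, ∑ j, colorClassDiff c i j ⬝ᵥ colorClassDiff c i j
      = 2 * (Fintype.card α - 1) * Fintype.card V := by
  classical
  have hdiag (u v : V) :
      (if c u = c v then (if u = v then (1 : ℝ) else 0) else 0) = if u = v then 1 else 0 := by
    by_cases h : u = v <;> simp [h]
  have h := sum_colorClassDiff_dotProduct_mulVec c (1 : Matrix V V ℝ)
  simp only [one_mulVec, one_apply, hdiag, sum_ite_eq, mem_univ, ↓reduceIte, sum_const,
    card_univ, nsmul_eq_mul, mul_one] at h
  rw [h]
  ring

end ColorClassDiff

namespace SimpleGraph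

variable {V : Type*} [Fintype V] (G : SimpleGraph V) [DecidableRel G.Adj]

theorem sum_sum_adjMatrix {R : Type*} [NonAssocSemiring R] :
    ∑ u, ∑ v, G.adjMatrix R u v = ∑ v, (G.degree v : R) := by
  simp [adjMatrix_apply, degree, neighborFinset_eq_filter, sum_boole]

variable [DecidableEq V]

theorem sum_sum_degMatrix {R : Type*} [NonAssocSemiring R] :
    ∑ u, ∑ v, G.degMatrix R u v = ∑ v, (G.degree v : R) := by
  simp [degMatrix, diagonal_apply]

theorem sum_degrees_le_of_eigenvalues_le (hA : (G.adjMatrix ℝ).IsHermitian) {s : ℝ}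
    (hs : ∀ i, hA.eigenvalues i ≤ s) : ∑ v, (G.degree v : ℝ) ≤ s * Fintype.card V := by
  simpa [dotProduct, adjMatrix_mulVec_const_apply] using
    hA.dotProduct_mulVec_le_mul_dotProduct_self hs (fun _ => 1)

theorem exists_eigenvalues_lapMatrix_eq_zero [Nonempty V] (hL : (G.lapMatrix ℝ).IsHermitian) :
    ∃ i, hL.eigenvalues i = 0 := by
  have h := hL.det_eq_prod_eigenvalues
  rw [det_lapMatrix_eq_zero] at h
  obtain ⟨i, -, hi⟩ := prod_eq_zero_iff.mp (by simpa using h.symm)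
  exact ⟨i, hi⟩

variable {G}

theorem Coloring.sum_sum_ite_degMatrix_add_adjMatrix {R α : Type*} [NonAssocSemiring R]
    [DecidableEq α] (C : G.Coloring α) :
    ∑ u, ∑ v, (if C u = C v then (G.degMatrix R + G.adjMatrix R) u v else 0)
      = ∑ v, (G.degree v : R) := by
  have hdiag (u v : V) : (if C u = C v then (G.degMatrix R + G.adjMatrix R) u v else 0)
      = if u = v then (G.degree u : R) else 0 := by
    by_cases huv : u = v
    · subst huv
      simp [degMatrix]
    · have hnadj : C u = C v → ¬ G.Adj u v := fun h hadj => C.valid hadj h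
      simp +contextual [degMatrix, adjMatrix_apply, huv, hnadj]
  simp only [hdiag, sum_ite_eq, mem_univ, if_true]

theorem Coloring.mul_card_le_sum_degrees_of_le_eigenvalues {α : Type*} [Fintype α]
    [DecidableEq α] (C : G.Coloring α) (hQ : (G.degMatrix ℝ + G.adjMatrix ℝ).IsHermitian)
    {t : ℝ} (ht : ∀ i, t ≤ hQ.eigenvalues i) :
    t * (Fintype.card α - 1) * Fintype.card V
      ≤ (Fintype.card α - 2) * ∑ v, (G.degree v : ℝ) := by
  have h : t * ∑ i, ∑ j, colorClassDiff C i j ⬝ᵥ colorClassDiff C i j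
      ≤ ∑ i, ∑ j, colorClassDiff C i j ⬝ᵥ
          (G.degMatrix ℝ + G.adjMatrix ℝ) *ᵥ colorClassDiff C i j := by
    simp only [mul_sum]
    exact sum_le_sum fun i _ => sum_le_sum fun j _ =>
      hQ.mul_dotProduct_self_le_dotProduct_mulVec ht _
  rw [sum_colorClassDiff_dotProduct_self, sum_colorClassDiff_dotProduct_mulVec,
    C.sum_sum_ite_degMatrix_add_adjMatrix] at h
  simp only [Matrix.add_apply, sum_add_distrib, sum_sum_degMatrix, sum_sum_adjMatrix] at h
  linarith

end SimpleGraph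

section SortedEnumeration

variable {ι α : Type*} [Preorder ι] [Preorder α] {f g : ι → α}

theorem Antitone.le_of_exists_perm_of_isBot (hf : Antitone f)
    (hfg : ∃ e : Equiv.Perm ι, f = g ∘ e) {i₀ : ι} (h : IsBot i₀) (i : ι) :
    g i ≤ f i₀ := by
  obtain ⟨e, rfl⟩ := hfg
  simpa using hf (h (e.symm i))

theorem Antitone.ge_of_exists_perm_of_isTop (hf : Antitone f)
    (hfg : ∃ e : Equiv.Perm ι, f = g ∘ e) {i₀ : ι} (h : IsTop i₀) (i : ι) :
    f i₀ ≤ g i := by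
  obtain ⟨e, rfl⟩ := hfg
  simpa using hf (h (e.symm i))

end SortedEnumeration

/-- **Kolotilina's second bound.** For a finite simple graph `G` on `n` vertices with at least
one edge and chromatic number `χ`, `μ_1 ≤ (χ - 1)·(μ_1 - δ_n + θ_n)`; equivalently
`χ ≥ 1 + μ_1/(μ_1 - δ_n + θ_n)`, where `θ_n = 0`.  Here `μ`, `θ`, `δ` are the non-increasing
enumerations of the eigenvalues of the adjacency matrix, the Laplacian `L = D - A` and the
signless Laplacian `Q = D + A`, respectively. -/
theorem stmt_6 {n : ℕ} (hn : 0 < n) (G : SimpleGraph (Fin n)) [DecidableRel G.Adj]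
    (he : ∃ v w : Fin n, G.Adj v w)
    (χ : ℕ) (hχ : G.chromaticNumber = (χ : ℕ∞))
    (hA : (G.adjMatrix ℝ).IsHermitian)
    (hL : (G.lapMatrix ℝ).IsHermitian)
    (hQ : (G.degMatrix ℝ + G.adjMatrix ℝ).IsHermitian)
    (μ θ δ : Fin n → ℝ)
    (hμa : Antitone μ) (hμ : ∃ e : Equiv.Perm (Fin n), μ = hA.eigenvalues ∘ e)
    (hθa : Antitone θ) (hθ : ∃ e : Equiv.Perm (Fin n), θ = hL.eigenvalues ∘ e)
    (hδa : Antitone δ) (hδ : ∃ e : Equiv.Perm (Fin n), δ = hQ.eigenvalues ∘ e) :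
    μ ⟨0, hn⟩ ≤ ((χ : ℝ) - 1) *
        (μ ⟨0, hn⟩ - δ ⟨n - 1, by omega⟩ + θ ⟨n - 1, by omega⟩) ∧
    (χ : ℝ) ≥ 1 + μ ⟨0, hn⟩ /
        (μ ⟨0, hn⟩ - δ ⟨n - 1, by omega⟩ + θ ⟨n - 1, by omega⟩) ∧
    θ ⟨n - 1, by omega⟩ = 0 := by
  obtain ⟨v, w, hvw⟩ := he
  set μ₁ := μ ⟨0, hn⟩
  set δₙ := δ ⟨n - 1, by omega⟩
  have hbot : IsBot (⟨0, hn⟩ : Fin n) := fun _ => Nat.zero_le _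
  have htop : IsTop (⟨n - 1, by omega⟩ : Fin n) := fun j => Nat.le_sub_one_of_lt j.isLt
  have hθn : θ ⟨n - 1, by omega⟩ = 0 := by
    have : Nonempty (Fin n) := ⟨v⟩
    obtain ⟨i, hi⟩ := G.exists_eigenvalues_lapMatrix_eq_zero hL
    obtain ⟨e, rfl⟩ := hθ
    exact le_antisymm (hi ▸ hθa.ge_of_exists_perm_of_isTop ⟨e, rfl⟩ htop i)
      ((G.posSemidef_lapMatrix ℝ).eigenvalues_nonneg _)
  obtain ⟨C⟩ := G.chromaticNumber_le_iff_colorable.mp hχ.le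
  have hχ2 : (2 : ℝ) ≤ χ := by
    exact_mod_cast ENat.natCast_le_natCast.mp (hχ ▸ G.two_le_chromaticNumber_of_adj hvw)
  have hQbound : δₙ * (χ - 1) * n ≤ (χ - 2) * ∑ u, (G.degree u : ℝ) := by
    simpa using C.mul_card_le_sum_degrees_of_le_eigenvalues hQ
      (hδa.ge_of_exists_perm_of_isTop hδ htop)
  have hAbound : ∑ u, (G.degree u : ℝ) ≤ μ₁ * n := by
    simpa using G.sum_degrees_le_of_eigenvalues_le hA (hμa.le_of_exists_perm_of_isBot hμ hbot)
  have hdeg : 0 < ∑ u, (G.degree u : ℝ) := sum_pos' (fun _ _ => by positivity)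
    ⟨v, mem_univ v, Nat.cast_pos.mpr ((G.degree_pos_iff_exists_adj v).mpr ⟨w, hvw⟩)⟩
  have hnR : (0 : ℝ) < n := Nat.cast_pos.mpr hn
  have hkey : ((χ : ℝ) - 1) * δₙ ≤ (χ - 2) * μ₁ := by
    refine le_of_mul_le_mul_right ?_ hnR
    calc ((χ : ℝ) - 1) * δₙ * n = δₙ * (χ - 1) * n := by ring
      _ ≤ (χ - 2) * ∑ u, (G.degree u : ℝ) := hQbound
      _ ≤ (χ - 2) * (μ₁ * n) := mul_le_mul_of_nonneg_left hAbound (by linarith)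
      _ = (χ - 2) * μ₁ * n := by ring
  have hμ₁ : 0 < μ₁ := by nlinarith
  have hgap : 0 < μ₁ - δₙ := by nlinarith
  rw [hθn, add_zero]
  refine ⟨by linarith, ?_, rfl⟩
  rw [ge_iff_le, ← le_sub_iff_add_le', div_le_iff₀ hgap]
  linarith
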